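/- The map h : Ξ → E given by h(η, ξ) = exp(−√3·(η + ξ) + i·ξ), where Ξ = {(η, ξ) ∈ ℝ² : −3π/2 < η ≤ π/2 and ξ < −η} and E = {v ∈ ℂ : |v| > 1}, is a continuous bijection from Ξ onto E. -/

import Mathlib

/-!
Write `h = exp ∘ L` with `L(η, ξ) = −√3(η + ξ) + iξ`. The affine map `L` carries `Ξ` bijectively
onto the set of `z` with `Re z > 0` whose imaginary part lies in a half-open window of length `2π`
whose position depends on `Re z`. On any such set `exp` is injective with image `ℂ \ {0}`, because
its only identifications are by `2πi`-translations, and `|exp z| > 1` exactly when `Re z > 0`.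
-/

/-- The map `h(η, ξ) = exp(−√3(η + ξ) + iξ)`. -/
noncomputable def hfun (p : ℝ × ℝ) : ℂ :=
  Complex.exp ((-(Real.sqrt 3) * (p.1 + p.2) : ℝ) + Complex.I * (p.2 : ℂ))

/-- The trapezoid `Ξ = {(η, ξ) : −3π/2 < η ≤ π/2, ξ < −η}`. -/
def Xi : Set (ℝ × ℝ) :=
  {p : ℝ × ℝ | -(3 * Real.pi / 2) < p.1 ∧ p.1 ≤ Real.pi / 2 ∧ p.2 < -p.1}

open Real Set

namespace Complex

def expFundamentalDomain (c : ℝ → ℝ) : Set ℂ :=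
  {z | z.im ∈ Ico (c z.re) (c z.re + 2 * π)}

theorem injOn_exp_expFundamentalDomain (c : ℝ → ℝ) :
    InjOn exp (expFundamentalDomain c) := by
  intro z hz w hw hzw
  obtain ⟨n, rfl⟩ := exp_eq_exp_iff_exists_int.1 hzw
  have hre : (w + n * (2 * π * I)).re = w.re := by simp
  have him : (w + n * (2 * π * I)).im = w.im + n • (2 * π) := by simp
  obtain ⟨m, -, huniq⟩ :=
    existsUnique_sub_zsmul_mem_Ico two_pi_pos (w + n * (2 * π * I)).im (c w.re)
  have hn : n = 0 :=
    (huniq n (by simpa [expFundamentalDomain, him] using hw)).trans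
      (huniq 0 (by simpa [expFundamentalDomain, hre] using hz)).symm
  simp [hn]

theorem surjOn_exp_expFundamentalDomain (c : ℝ → ℝ) :
    SurjOn exp (expFundamentalDomain c) {0}ᶜ := by
  intro v hv
  obtain ⟨m, hm, -⟩ := existsUnique_add_zsmul_mem_Ico two_pi_pos (log v).im (c (log v).re)
  refine ⟨log v + m * (2 * π * I), ?_, ?_⟩
  · simpa [expFundamentalDomain] using hm
  · rw [exp_add, exp_int_mul_two_pi_mul_I, mul_one, exp_log hv]

theorem bijOn_exp_expFundamentalDomain_inter_re_pos (c : ℝ → ℝ) :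
    BijOn exp (expFundamentalDomain c ∩ {z | 0 < z.re}) {v | 1 < ‖v‖} := by
  have one_lt_norm_exp_iff (z : ℂ) : 1 < ‖exp z‖ ↔ 0 < z.re := by
    rw [norm_exp, one_lt_exp_iff]
  have hbij : BijOn exp (expFundamentalDomain c) {0}ᶜ :=
    ⟨fun _ _ ↦ exp_ne_zero _, injOn_exp_expFundamentalDomain c, surjOn_exp_expFundamentalDomain c⟩
  have hrestrict := hbij.inter_mapsTo (s₂ := {z : ℂ | 0 < z.re}) (t₂ := {v | 1 < ‖v‖})
    (fun z hz ↦ (one_lt_norm_exp_iff z).2 hz) (fun z hz ↦ (one_lt_norm_exp_iff z).1 hz.2)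
  have hne : {v : ℂ | 1 < ‖v‖} ⊆ {0}ᶜ := fun v hv ↦ norm_pos_iff.1 (one_pos.trans hv)
  rwa [inter_eq_right.2 hne] at hrestrict

end Complex

open Complex

noncomputable def hfunExponent (p : ℝ × ℝ) : ℂ :=
  ((-(√3) * (p.1 + p.2) : ℝ) : ℂ) + I * (p.2 : ℂ)

theorem hfunExponent_re (p : ℝ × ℝ) : (hfunExponent p).re = -(√3) * (p.1 + p.2) := by
  simp [hfunExponent]

theorem hfunExponent_im (p : ℝ × ℝ) : (hfunExponent p).im = p.2 := by
  simp [hfunExponent]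

theorem hfun_eq_exp_comp_hfunExponent : hfun = Complex.exp ∘ hfunExponent := rfl

/- With `s = η + ξ = −Re z / √3`, the bounds `−3π/2 < η ≤ π/2` on `η = s − ξ` read
`s − π/2 ≤ ξ < s + 3π/2`. -/
theorem bijOn_hfunExponent :
    BijOn hfunExponent Xi (expFundamentalDomain (fun x ↦ -x / √3 - π / 2) ∩ {z | 0 < z.re}) := by
  have hsqrt : 0 < √3 := by positivity
  refine InvOn.bijOn (f' := fun z ↦ (-z.re / √3 - z.im, z.im))
    ⟨fun p _ ↦ ?_, fun z _ ↦ ?_⟩ ?_ ?_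
  · refine Prod.ext ?_ (hfunExponent_im p)
    simp only [hfunExponent_re, hfunExponent_im]
    field_simp
    ring
  · apply Complex.ext <;> simp only [hfunExponent_re, hfunExponent_im]
    field_simp
    ring
  · rintro ⟨η, ξ⟩ ⟨hη₁, hη₂, hξ⟩
    dsimp only at hη₁ hη₂ hξ
    have hc : -(-√3 * (η + ξ)) / √3 = η + ξ := by field_simp
    refine ⟨⟨?_, ?_⟩, ?_⟩
    · simp only [hfunExponent_re, hfunExponent_im, hc]; linarith
    · simp only [hfunExponent_re, hfunExponent_im, hc]; linarith
    · show 0 < (hfunExponent (η, ξ)).re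
      rw [hfunExponent_re]; nlinarith
  · rintro z ⟨⟨hlo, hhi⟩, hre : 0 < z.re⟩
    have : -z.re / √3 < 0 := div_neg_of_neg_of_pos (neg_neg_of_pos hre) hsqrt
    exact ⟨by linarith, by linarith, by dsimp only; linarith⟩

/-- `h` is a continuous bijection from `Ξ` onto `E = {v : |v| > 1}`. -/
theorem hfun_continuous_bijective :
    ContinuousOn hfun Xi ∧
    Set.BijOn hfun Xi {v : ℂ | 1 < ‖v‖} := by
  refine ⟨by unfold hfun; fun_prop, ?_⟩
  rw [hfun_eq_exp_comp_hfunExponent]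
  exact (bijOn_exp_expFundamentalDomain_inter_re_pos _).comp bijOn_hfunExponent
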